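/- Fix q ≥ 0 and η ≥ 0. On the open set {ρ ≥ 0 : σ(q,ρ) > 0}, the map ρ ↦ p²(q,ρ,η) is differentiable and its derivative equals −v ∫_{ℝ^ν} (2π)^{−ν} { (e^{β E(k,q,ρ)} − 1)^{−1} · f(k,ρ)/E(k,q,ρ) + (1/2)( f(k,ρ)/E(k,q,ρ) − 1 ) } dk − v η²/(f(0,ρ) − uq)² + vρ. -/

import Mathlib

open MeasureTheory Real Filter Topology

noncomputable section

namespace PB

abbrev Kspace (ν : ℕ) : Type := EuclideanSpace ℝ (Fin ν)

/-- kinetic energy `ε(k) = ‖k‖²/(2m)` -/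
def eps (ν : ℕ) (m : ℝ) (k : Kspace ν) : ℝ := ‖k‖ ^ 2 / (2 * m)

/-- `f(k,ρ) = ε(k) − μ + vρ` -/
def fF (ν : ℕ) (m μ v : ℝ) (k : Kspace ν) (ρ : ℝ) : ℝ := eps ν m k - μ + v * ρ

/-- `E(k,q,ρ) = (f(k,ρ)² − u²q²|λ(k)|²)^{1/2}` -/
def eE (ν : ℕ) (m μ v u : ℝ) (lam : Kspace ν → ℂ) (k : Kspace ν) (q ρ : ℝ) : ℝ :=
  Real.sqrt (fF ν m μ v k ρ ^ 2 - u ^ 2 * q ^ 2 * ‖lam k‖ ^ 2)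

/-- `σ(q,ρ) = vρ − μ − |u|q` -/
def sigma0 (μ v u q ρ : ℝ) : ℝ := v * ρ - μ - |u| * q

/-- The point `(2π/L)·z` of the dual lattice `Λ* = (2π/L)ℤ^ν`. -/
def latticePt (ν : ℕ) (L : ℝ) (z : Fin ν → ℤ) : Kspace ν :=
  (WithLp.equiv 2 (Fin ν → ℝ)).symm fun i => (2 * π / L) * (z i : ℝ)

/-- integrand of the limiting approximating pressure -/
def p2Int (ν : ℕ) (m μ v u β : ℝ) (lam : Kspace ν → ℂ) (q ρ : ℝ) (k : Kspace ν) : ℝ :=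
  -β⁻¹ * Real.log (1 - Real.exp (-β * eE ν m μ v u lam k q ρ))
    - (eE ν m μ v u lam k q ρ - fF ν m μ v k ρ) / 2

/-- `p²(q,ρ)`, the limiting approximating pressure -/
def p2 (ν : ℕ) (m μ v u β : ℝ) (lam : Kspace ν → ℂ) (q ρ : ℝ) : ℝ :=
  (∫ k : Kspace ν, ((2 * π) ^ ν)⁻¹ * p2Int ν m μ v u β lam q ρ k)
    - u / 2 * q ^ 2 + v / 2 * ρ ^ 2

/-- `p²(q,ρ,η) = p²(q,ρ) + η²/(f(0,ρ) − uq)` -/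
def p2eta (ν : ℕ) (m μ v u β : ℝ) (lam : Kspace ν → ℂ) (q ρ η : ℝ) : ℝ :=
  p2 ν m μ v u β lam q ρ + η ^ 2 / (fF ν m μ v 0 ρ - u * q)

/-- `p²_Λ(q,ρ)`, the finite-volume approximating pressure (cube of side `L`, `V = L^ν`) -/
def p2L (ν : ℕ) (m μ v u β L : ℝ) (lam : Kspace ν → ℂ) (q ρ : ℝ) : ℝ :=
  -(β * L ^ ν)⁻¹ *
      (∑' z : Fin ν → ℤ,
        Real.log (1 - Real.exp (-β * eE ν m μ v u lam (latticePt ν L z) q ρ)))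
    - (2 * L ^ ν)⁻¹ *
      (∑' z : Fin ν → ℤ,
        (eE ν m μ v u lam (latticePt ν L z) q ρ - fF ν m μ v (latticePt ν L z) ρ))
    - u / 2 * q ^ 2 + v / 2 * ρ ^ 2

/-- `p²_Λ(q,ρ,η) = p²_Λ(q,ρ) + η²/(f(0,ρ) − uq)` -/
def p2Leta (ν : ℕ) (m μ v u β L : ℝ) (lam : Kspace ν → ℂ) (q ρ η : ℝ) : ℝ :=
  p2L ν m μ v u β L lam q ρ + η ^ 2 / (fF ν m μ v 0 ρ - u * q)


/-!
Differentiate under the integral sign. On the neighbourhood of `ρ` where `σ > σ(ρ)/2 =: s`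
one has `E ≥ ε + s`, so the Bose factor `(e^{βE} - 1)⁻¹` is at most `e^{-βε}/(e^{βs} - 1)`, a
Gaussian; and since `(f - E)(f + E) = u²q²|λ|²`, the remaining terms `f - E` and `f/E - 1` are
`O(|λ|²) ≤ O(|λ|)`, which is integrable by the decay hypothesis. Hence both the integrand of
`p²` and its `ρ`-derivative are dominated by a multiple of `e^{-βε(k)} + |λ(k)|`.
-/

lemma one_add_rpow_le_two_rpow_mul {x p : ℝ} (hx : 0 ≤ x) (hp : 0 ≤ p) :
    (1 + x) ^ p ≤ 2 ^ p * (1 + x ^ p) := by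
  rcases le_total x 1 with hx1 | hx1
  · calc (1 + x) ^ p ≤ 2 ^ p := rpow_le_rpow (by positivity) (by linarith) hp
      _ ≤ 2 ^ p * (1 + x ^ p) :=
        le_mul_of_one_le_right (by positivity) (by linarith [rpow_nonneg hx p])
  · calc (1 + x) ^ p ≤ (2 * x) ^ p := rpow_le_rpow (by positivity) (by linarith) hp
      _ = 2 ^ p * x ^ p := mul_rpow zero_le_two hx
      _ ≤ 2 ^ p * (1 + x ^ p) := by gcongr; linarith

lemma integrable_of_norm_le_div_one_add_rpow {E F : Type*} [NormedAddCommGroup E]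
    [NormedSpace ℝ E] [FiniteDimensional ℝ E] [MeasurableSpace E] [BorelSpace E]
    [NormedAddCommGroup F] {μ : Measure E} [μ.IsAddHaarMeasure] {g : E → F} {c r : ℝ}
    (hg : AEStronglyMeasurable g μ) (hr : (Module.finrank ℝ E : ℝ) < r)
    (hle : ∀ x, ‖g x‖ ≤ c / (1 + ‖x‖ ^ r)) : Integrable g μ := by
  have hr0 : 0 < r := lt_of_le_of_lt (Nat.cast_nonneg _) hr
  have hc : 0 ≤ c := by simpa [zero_rpow hr0.ne'] using (norm_nonneg _).trans (hle 0)
  refine ((integrable_one_add_norm hr).const_mul (2 ^ r * c)).mono' hg (ae_of_all _ fun x => ?_)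
  have hx : 0 < (1 + ‖x‖) ^ r := by positivity
  calc ‖g x‖ ≤ c / (1 + ‖x‖ ^ r) := hle x
    _ ≤ c / ((1 + ‖x‖) ^ r / 2 ^ r) := by
      gcongr
      rw [div_le_iff₀ (by positivity), mul_comm]
      exact one_add_rpow_le_two_rpow_mul (norm_nonneg x) hr0.le
    _ = 2 ^ r * c * (1 + ‖x‖) ^ (-r) := by
      rw [rpow_neg (by positivity)]
      field_simp

lemma inv_exp_sub_one_le {a b t : ℝ} (ha : 0 ≤ a) (hb : 0 < b) (ht : a + b ≤ t) :
    (exp t - 1)⁻¹ ≤ exp (-a) * (exp b - 1)⁻¹ := by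
  have hb1 : 0 < exp b - 1 := by linarith [add_one_lt_exp hb.ne']
  have hle : exp a * (exp b - 1) ≤ exp t - 1 := by
    nlinarith [one_le_exp ha, exp_le_exp.2 ht, exp_add a b]
  rw [exp_neg, ← mul_inv]
  exact inv_anti₀ (by positivity) hle

lemma neg_log_one_sub_exp_neg_le {t : ℝ} (ht : 0 < t) :
    -log (1 - exp (-t)) ≤ (exp t - 1)⁻¹ := by
  have ht1 : 0 < exp t - 1 := by linarith [add_one_lt_exp ht.ne']
  have h : 1 - exp (-t) = (1 + (exp t - 1)⁻¹)⁻¹ := by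
    rw [exp_neg]
    field_simp
    ring
  rw [h, log_inv, neg_neg]
  linarith [log_le_sub_one_of_pos (show 0 < 1 + (exp t - 1)⁻¹ by positivity)]

lemma hasDerivAt_neg_inv_mul_log_one_sub_exp {β t : ℝ} (hβ : 0 < β) (ht : 0 < t) :
    HasDerivAt (fun t => -β⁻¹ * log (1 - exp (-β * t))) (-(exp (β * t) - 1)⁻¹) t := by
  have hlt : exp (-β * t) < 1 := exp_lt_one_iff.2 (by nlinarith)
  have h := ((((hasDerivAt_id t).const_mul (-β)).exp).const_sub 1).log
    (sub_pos.2 hlt).ne' |>.const_mul (-β⁻¹)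
  refine h.congr_deriv ?_
  have : exp (β * t) - 1 ≠ 0 := (sub_pos.2 (one_lt_exp_iff.2 (mul_pos hβ ht))).ne'
  simp only [id, neg_mul β t, exp_neg]
  field_simp

lemma sub_le_div_of_sq_eq_sq_sub {f E a s : ℝ} (hs : 0 < s) (hsE : s ≤ E) (hEf : E ≤ f)
    (hsq : E ^ 2 = f ^ 2 - a) : f - E ≤ a / (2 * s) := by
  rw [le_div_iff₀ (by positivity)]
  nlinarith

lemma div_sub_one_le_div_of_sq_eq_sq_sub {f E a s : ℝ} (hs : 0 < s) (hsE : s ≤ E)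
    (hEf : E ≤ f) (hsq : E ^ 2 = f ^ 2 - a) : f / E - 1 ≤ a / (2 * s ^ 2) := by
  have hE : 0 < E := hs.trans_le hsE
  have hfactor : a = (f - E) * (f + E) := by linear_combination hsq
  rw [div_sub_one hE.ne', div_le_div_iff₀ hE (by positivity)]
  calc (f - E) * (2 * s ^ 2) ≤ (f - E) * ((f + E) * E) :=
        mul_le_mul_of_nonneg_left (by nlinarith) (sub_nonneg.2 hEf)
    _ = a * E := by rw [hfactor]; ring

section Integrand

variable {ν : ℕ} {m μ v u β q : ℝ} {lam : Kspace ν → ℂ}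

def dp2Int (ν : ℕ) (m μ v u β : ℝ) (lam : Kspace ν → ℂ) (q ρ : ℝ) (k : Kspace ν) : ℝ :=
  (exp (β * eE ν m μ v u lam k q ρ) - 1)⁻¹ * (fF ν m μ v k ρ / eE ν m μ v u lam k q ρ)
    + (1 / 2) * (fF ν m μ v k ρ / eE ν m μ v u lam k q ρ - 1)

lemma eps_nonneg (hm : 0 < m) (k : Kspace ν) : 0 ≤ eps ν m k := by
  unfold eps; positivity

lemma hasDerivAt_fF (k : Kspace ν) (ρ : ℝ) : HasDerivAt (fun r => fF ν m μ v k r) v ρ := by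
  simpa [fF] using ((hasDerivAt_id ρ).const_mul v).const_add (eps ν m k - μ)

lemma continuous_sigma0 : Continuous (fun r => sigma0 μ v u q r) := by
  unfold sigma0; fun_prop

lemma fF_eq_eps_add_sigma0 (k : Kspace ν) (ρ : ℝ) :
    fF ν m μ v k ρ = eps ν m k + sigma0 μ v u q ρ + |u| * q := by
  unfold fF sigma0; ring

lemma sq_eps_add_sigma0_le (hm : 0 < m) (hq : 0 ≤ q) {ρ : ℝ} (hσ : 0 ≤ sigma0 μ v u q ρ)
    (k : Kspace ν) (hl : ‖lam k‖ ≤ 1) :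
    (eps ν m k + sigma0 μ v u q ρ) ^ 2 ≤ fF ν m μ v k ρ ^ 2 - u ^ 2 * q ^ 2 * ‖lam k‖ ^ 2 := by
  have hε := eps_nonneg hm k
  have huq : 0 ≤ |u| * q := by positivity
  have hcoupling : u ^ 2 * q ^ 2 * ‖lam k‖ ^ 2 ≤ (|u| * q) ^ 2 := by
    rw [show (|u| * q) ^ 2 = u ^ 2 * q ^ 2 by rw [mul_pow, sq_abs]]
    exact mul_le_of_le_one_right (by positivity) (pow_le_one₀ (norm_nonneg _) hl)
  rw [fF_eq_eps_add_sigma0 (u := u) (q := q)]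
  nlinarith

lemma eps_add_sigma0_le_eE (hm : 0 < m) (hq : 0 ≤ q) {ρ : ℝ} (hσ : 0 ≤ sigma0 μ v u q ρ)
    (k : Kspace ν) (hl : ‖lam k‖ ≤ 1) :
    eps ν m k + sigma0 μ v u q ρ ≤ eE ν m μ v u lam k q ρ :=
  le_sqrt_of_sq_le (sq_eps_add_sigma0_le hm hq hσ k hl)

lemma eE_sq (hm : 0 < m) (hq : 0 ≤ q) {ρ : ℝ} (hσ : 0 ≤ sigma0 μ v u q ρ)
    (k : Kspace ν) (hl : ‖lam k‖ ≤ 1) :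
    eE ν m μ v u lam k q ρ ^ 2 = fF ν m μ v k ρ ^ 2 - u ^ 2 * q ^ 2 * ‖lam k‖ ^ 2 :=
  sq_sqrt ((sq_nonneg _).trans (sq_eps_add_sigma0_le hm hq hσ k hl))

lemma eE_le_fF (hm : 0 < m) (hq : 0 ≤ q) {ρ : ℝ} (hσ : 0 ≤ sigma0 μ v u q ρ)
    (k : Kspace ν) : eE ν m μ v u lam k q ρ ≤ fF ν m μ v k ρ := by
  have hf : 0 ≤ fF ν m μ v k ρ := by
    rw [fF_eq_eps_add_sigma0 (u := u) (q := q)]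
    have := eps_nonneg hm k
    positivity
  calc eE ν m μ v u lam k q ρ ≤ √(fF ν m μ v k ρ ^ 2) :=
        sqrt_le_sqrt (sub_le_self _ (by positivity))
    _ = fF ν m μ v k ρ := sqrt_sq hf

lemma eE_pos (hm : 0 < m) (hq : 0 ≤ q) {ρ : ℝ} (hσ : 0 < sigma0 μ v u q ρ)
    (k : Kspace ν) (hl : ‖lam k‖ ≤ 1) : 0 < eE ν m μ v u lam k q ρ :=
  (add_pos_of_nonneg_of_pos (eps_nonneg hm k) hσ).trans_le
    (eps_add_sigma0_le_eE hm hq hσ.le k hl)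

lemma hasDerivAt_eE (hm : 0 < m) (hq : 0 ≤ q) {ρ : ℝ} (hσ : 0 < sigma0 μ v u q ρ)
    (k : Kspace ν) (hl : ‖lam k‖ ≤ 1) :
    HasDerivAt (fun r => eE ν m μ v u lam k q r)
      (v * fF ν m μ v k ρ / eE ν m μ v u lam k q ρ) ρ := by
  have hE := eE_pos hm hq hσ k hl
  have hrad : fF ν m μ v k ρ ^ 2 - u ^ 2 * q ^ 2 * ‖lam k‖ ^ 2 ≠ 0 := by
    rw [← eE_sq hm hq hσ.le k hl]; positivity
  have hsq : HasDerivAt (fun r => fF ν m μ v k r ^ 2 - u ^ 2 * q ^ 2 * ‖lam k‖ ^ 2)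
      (2 * fF ν m μ v k ρ * v) ρ := by
    simpa using ((hasDerivAt_fF k ρ).pow 2).sub_const (u ^ 2 * q ^ 2 * ‖lam k‖ ^ 2)
  refine (hsq.sqrt hrad).congr_deriv ?_
  simp only [eE] at hE ⊢
  field_simp

lemma hasDerivAt_p2Int (hm : 0 < m) (hβ : 0 < β) (hq : 0 ≤ q) {ρ : ℝ}
    (hσ : 0 < sigma0 μ v u q ρ) (k : Kspace ν) (hl : ‖lam k‖ ≤ 1) :
    HasDerivAt (fun r => p2Int ν m μ v u β lam q r k) (-v * dp2Int ν m μ v u β lam q ρ k) ρ := by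
  have hE := eE_pos hm hq hσ k hl
  have hdE := hasDerivAt_eE hm hq hσ k hl
  have h := ((hasDerivAt_neg_inv_mul_log_one_sub_exp hβ hE).comp ρ hdE).sub
    ((hdE.sub (hasDerivAt_fF (m := m) (μ := μ) (v := v) k ρ)).div_const 2)
  refine h.congr_deriv ?_
  unfold dp2Int
  field_simp
  ring

lemma le_eE_of_le_sigma0 (hm : 0 < m) (hq : 0 ≤ q) {s ρ : ℝ} (hs : 0 ≤ s)
    (hsσ : s ≤ sigma0 μ v u q ρ) (k : Kspace ν) (hl : ‖lam k‖ ≤ 1) :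
    s ≤ eE ν m μ v u lam k q ρ := by
  linarith [eps_nonneg hm k, eps_add_sigma0_le_eE hm hq (hs.trans hsσ) k hl]

lemma inv_exp_mul_eE_sub_one_le (hm : 0 < m) (hβ : 0 < β) (hq : 0 ≤ q) {s ρ : ℝ}
    (hs : 0 < s) (hsσ : s ≤ sigma0 μ v u q ρ) (k : Kspace ν) (hl : ‖lam k‖ ≤ 1) :
    (exp (β * eE ν m μ v u lam k q ρ) - 1)⁻¹ ≤
      exp (-β * eps ν m k) * (exp (β * s) - 1)⁻¹ := by
  have hE := eps_add_sigma0_le_eE hm hq (hs.le.trans hsσ) k hl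
  rw [neg_mul]
  exact inv_exp_sub_one_le (mul_nonneg hβ.le (eps_nonneg hm k)) (mul_pos hβ hs) (by nlinarith)

lemma fF_sub_eE_le (hm : 0 < m) (hq : 0 ≤ q) {s ρ : ℝ} (hs : 0 < s)
    (hsσ : s ≤ sigma0 μ v u q ρ) (k : Kspace ν) (hl : ‖lam k‖ ≤ 1) :
    fF ν m μ v k ρ - eE ν m μ v u lam k q ρ ≤ u ^ 2 * q ^ 2 * ‖lam k‖ / (2 * s) := by
  have hσ := hs.le.trans hsσ
  refine (sub_le_div_of_sq_eq_sq_sub hs (le_eE_of_le_sigma0 hm hq hs.le hsσ k hl)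
    (eE_le_fF hm hq hσ k) (eE_sq hm hq hσ k hl)).trans ?_
  gcongr
  exact pow_le_of_le_one (norm_nonneg _) hl two_ne_zero

lemma fF_div_eE_sub_one_le (hm : 0 < m) (hq : 0 ≤ q) {s ρ : ℝ} (hs : 0 < s)
    (hsσ : s ≤ sigma0 μ v u q ρ) (k : Kspace ν) (hl : ‖lam k‖ ≤ 1) :
    fF ν m μ v k ρ / eE ν m μ v u lam k q ρ - 1 ≤ u ^ 2 * q ^ 2 * ‖lam k‖ / (2 * s ^ 2) := by
  have hσ := hs.le.trans hsσ
  refine (div_sub_one_le_div_of_sq_eq_sq_sub hs (le_eE_of_le_sigma0 hm hq hs.le hsσ k hl)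
    (eE_le_fF hm hq hσ k) (eE_sq hm hq hσ k hl)).trans ?_
  gcongr
  exact pow_le_of_le_one (norm_nonneg _) hl two_ne_zero

lemma exists_abs_p2Int_le (hm : 0 < m) (hβ : 0 < β) (hq : 0 ≤ q)
    (hlam : ∀ k, ‖lam k‖ ≤ 1) {ρ : ℝ} (hσ : 0 < sigma0 μ v u q ρ) :
    ∃ C, ∀ k, |p2Int ν m μ v u β lam q ρ k| ≤ C * (exp (-β * eps ν m k) + ‖lam k‖) := by
  set s := sigma0 μ v u q ρ
  refine ⟨β⁻¹ * (exp (β * s) - 1)⁻¹ + u ^ 2 * q ^ 2 / (4 * s), fun k => ?_⟩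
  set E := eE ν m μ v u lam k q ρ
  have hβE : 0 < β * E := mul_pos hβ (eE_pos hm hq hσ k (hlam k))
  have hfE : 0 ≤ fF ν m μ v k ρ - E := sub_nonneg.2 (eE_le_fF hm hq hσ.le k)
  have hlog0 : 0 ≤ -log (1 - exp (-(β * E))) :=
    neg_nonneg.2 (log_nonpos (sub_nonneg.2 (exp_le_one_iff.2 (by linarith)))
      (sub_le_self _ (exp_pos _).le))
  have hB : 0 ≤ (exp (β * s) - 1)⁻¹ :=
    inv_nonneg.2 (by linarith [one_le_exp (by positivity : 0 ≤ β * s)])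
  have hthermal : β⁻¹ * -log (1 - exp (-(β * E))) ≤
      β⁻¹ * (exp (β * s) - 1)⁻¹ * exp (-β * eps ν m k) := by
    rw [mul_assoc, mul_comm (_ - 1)⁻¹]
    exact mul_le_mul_of_nonneg_left ((neg_log_one_sub_exp_neg_le hβE).trans
      (inv_exp_mul_eE_sub_one_le hm hβ hq hσ le_rfl k (hlam k))) (by positivity)
  have hzero_point : (fF ν m μ v k ρ - E) / 2 ≤ u ^ 2 * q ^ 2 / (4 * s) * ‖lam k‖ := by
    have := fF_sub_eE_le hm hq hσ le_rfl k (hlam k)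
    calc (fF ν m μ v k ρ - E) / 2 ≤ u ^ 2 * q ^ 2 * ‖lam k‖ / (2 * s) / 2 := by linarith
      _ = u ^ 2 * q ^ 2 / (4 * s) * ‖lam k‖ := by ring
  have hp2 : p2Int ν m μ v u β lam q ρ k =
      β⁻¹ * -log (1 - exp (-(β * E))) + (fF ν m μ v k ρ - E) / 2 := by
    simp only [p2Int, neg_mul]; ring
  have hA : 0 ≤ β⁻¹ * (exp (β * s) - 1)⁻¹ * ‖lam k‖ := by positivity
  have hD : 0 ≤ u ^ 2 * q ^ 2 / (4 * s) * exp (-β * eps ν m k) := by positivity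
  rw [hp2, abs_of_nonneg (by positivity)]
  linarith

lemma exists_abs_dp2Int_le (hm : 0 < m) (hβ : 0 < β) (hq : 0 ≤ q)
    (hlam : ∀ k, ‖lam k‖ ≤ 1) {s : ℝ} (hs : 0 < s) :
    ∃ C, ∀ ρ k, s ≤ sigma0 μ v u q ρ →
      |dp2Int ν m μ v u β lam q ρ k| ≤ C * (exp (-β * eps ν m k) + ‖lam k‖) := by
  set B := (exp (β * s) - 1)⁻¹
  set R := 1 + u ^ 2 * q ^ 2 / (2 * s ^ 2)
  refine ⟨B * R + u ^ 2 * q ^ 2 / (4 * s ^ 2), fun ρ k hsσ => ?_⟩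
  set E := eE ν m μ v u lam k q ρ
  set f := fF ν m μ v k ρ
  have hE : 0 < E := hs.trans_le (le_eE_of_le_sigma0 hm hq hs.le hsσ k (hlam k))
  have hratio := fF_div_eE_sub_one_le hm hq hs hsσ k (hlam k)
  have hratio1 : 1 ≤ f / E := (one_le_div hE).2 (eE_le_fF hm hq (hs.le.trans hsσ) k)
  have hB : 0 ≤ B := inv_nonneg.2 (by linarith [one_le_exp (by positivity : 0 ≤ β * s)])
  have hbose0 : 0 ≤ (exp (β * E) - 1)⁻¹ :=
    inv_nonneg.2 (by linarith [one_le_exp (by positivity : 0 ≤ β * E)])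
  have hratio_le : f / E ≤ R := by
    have : u ^ 2 * q ^ 2 * ‖lam k‖ ≤ u ^ 2 * q ^ 2 :=
      mul_le_of_le_one_right (by positivity) (hlam k)
    calc f / E ≤ 1 + u ^ 2 * q ^ 2 * ‖lam k‖ / (2 * s ^ 2) := by linarith
      _ ≤ 1 + u ^ 2 * q ^ 2 / (2 * s ^ 2) := by gcongr
  have hthermal : (exp (β * E) - 1)⁻¹ * (f / E) ≤ B * R * exp (-β * eps ν m k) := by
    rw [mul_right_comm]
    exact mul_le_mul ((inv_exp_mul_eE_sub_one_le hm hβ hq hs hsσ k (hlam k)).trans_eq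
      (mul_comm _ _)) hratio_le (by linarith) (by positivity)
  have hzero_point : 1 / 2 * (f / E - 1) ≤ u ^ 2 * q ^ 2 / (4 * s ^ 2) * ‖lam k‖ := by
    calc 1 / 2 * (f / E - 1) ≤ 1 / 2 * (u ^ 2 * q ^ 2 * ‖lam k‖ / (2 * s ^ 2)) := by linarith
      _ = u ^ 2 * q ^ 2 / (4 * s ^ 2) * ‖lam k‖ := by ring
  have hA : 0 ≤ B * R * ‖lam k‖ := by positivity
  have hD : 0 ≤ u ^ 2 * q ^ 2 / (4 * s ^ 2) * exp (-β * eps ν m k) := by positivity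
  have hthermal0 := mul_nonneg hbose0 (zero_le_one.trans hratio1)
  rw [abs_of_nonneg (by unfold dp2Int; linarith)]
  unfold dp2Int
  linarith

lemma measurable_p2Int (hmeas : Measurable lam) (ρ : ℝ) :
    Measurable (fun k => p2Int ν m μ v u β lam q ρ k) := by
  unfold p2Int eE fF eps; fun_prop

lemma measurable_dp2Int (hmeas : Measurable lam) (ρ : ℝ) :
    Measurable (fun k => dp2Int ν m μ v u β lam q ρ k) := by
  unfold dp2Int eE fF eps; fun_prop

lemma integrable_exp_neg_mul_eps (hm : 0 < m) (hβ : 0 < β) :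
    Integrable (fun k : Kspace ν => exp (-β * eps ν m k)) := by
  have hb : 0 < (β / (2 * m) : ℂ).re := by norm_cast; positivity
  refine (GaussianFourier.integrable_cexp_neg_mul_sq_norm_add hb 0 (0 : Kspace ν)).norm.congr
    (ae_of_all _ fun k => ?_)
  simp only [zero_mul, add_zero, Complex.norm_exp, eps]
  norm_cast
  congr 1
  field_simp

lemma hasDerivAt_integral_p2Int (hm : 0 < m) (hβ : 0 < β) (hq : 0 ≤ q)
    (hmeas : Measurable lam) (hlam : ∀ k, ‖lam k‖ ≤ 1) (hint : Integrable (fun k => ‖lam k‖))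
    {ρ : ℝ} (hσ : 0 < sigma0 μ v u q ρ) :
    HasDerivAt (fun r => ∫ k, p2Int ν m μ v u β lam q r k)
      (∫ k, -v * dp2Int ν m μ v u β lam q ρ k) ρ := by
  set s := sigma0 μ v u q ρ / 2
  have hs : 0 < s := half_pos hσ
  have hnhds : {r | s < sigma0 μ v u q r} ∈ 𝓝 ρ :=
    (isOpen_lt continuous_const continuous_sigma0).mem_nhds (half_lt_self hσ)
  have hmaj : Integrable (fun k => exp (-β * eps ν m k) + ‖lam k‖) :=
    (integrable_exp_neg_mul_eps hm hβ).add hint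
  obtain ⟨C₁, hC₁⟩ := exists_abs_p2Int_le hm hβ hq hlam hσ
  obtain ⟨C₂, hC₂⟩ := exists_abs_dp2Int_le (μ := μ) (v := v) hm hβ hq hlam hs
  refine (hasDerivAt_integral_of_dominated_loc_of_deriv_le hnhds
    (Eventually.of_forall fun r => (measurable_p2Int hmeas r).aestronglyMeasurable)
    ((hmaj.const_mul C₁).mono' (measurable_p2Int hmeas ρ).aestronglyMeasurable
      (ae_of_all _ fun k => hC₁ k))
    ((measurable_dp2Int hmeas ρ).const_mul (-v)).aestronglyMeasurable
    (ae_of_all _ fun k r hr => ?_) (hmaj.const_mul (|v| * C₂))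
    (ae_of_all _ fun k r hr =>
      hasDerivAt_p2Int hm hβ hq (hs.trans hr) k (hlam k))).2
  rw [norm_mul, norm_neg, Real.norm_eq_abs, Real.norm_eq_abs, mul_assoc]
  exact mul_le_mul_of_nonneg_left (hC₂ r k (le_of_lt hr)) (abs_nonneg v)

end Integrand

theorem statement6_general
    (ν : ℕ) (m β μ u v : ℝ) (hm : 0 < m) (hβ : 0 < β)
    (lam : Kspace ν → ℂ) (hmeas : Measurable lam)
    (hlam1 : ∀ k, ‖lam k‖ ≤ 1)
    (c δ : ℝ) (hδ : 0 < δ)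
    (hdec : ∀ k : Kspace ν, ‖lam k‖ ≤ c / (1 + ‖k‖ ^ (max (ν : ℝ) ((ν : ℝ) / 2 + 1) + δ)))
    (q : ℝ) (hq : 0 ≤ q) (η : ℝ) :
    ∀ ρ : ℝ, 0 ≤ ρ → 0 < sigma0 μ v u q ρ →
      HasDerivAt (fun r : ℝ => p2eta ν m μ v u β lam q r η)
        (-v * (∫ k : Kspace ν, ((2 * π) ^ ν)⁻¹ *
            ((Real.exp (β * eE ν m μ v u lam k q ρ) - 1)⁻¹ *
                (fF ν m μ v k ρ / eE ν m μ v u lam k q ρ)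
              + (1 / 2) * (fF ν m μ v k ρ / eE ν m μ v u lam k q ρ - 1)))
          - v * η ^ 2 / (fF ν m μ v 0 ρ - u * q) ^ 2 + v * ρ) ρ := by
  intro ρ _ hσ
  have hint : Integrable (fun k => ‖lam k‖) :=
    (integrable_of_norm_le_div_one_add_rpow hmeas.aestronglyMeasurable
      (by simpa using (le_max_left _ _).trans_lt (lt_add_of_pos_right _ hδ)) hdec).norm
  have hgap : 0 < fF ν m μ v 0 ρ - u * q := by
    have heps : eps ν m 0 = 0 := by simp [eps]
    rw [fF_eq_eps_add_sigma0 (u := u) (q := q), heps]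
    linarith [mul_le_mul_of_nonneg_right (le_abs_self u) hq]
  have hp2 := (hasDerivAt_integral_p2Int hm hβ hq hmeas hlam1 hint hσ).const_mul ((2 * π) ^ ν)⁻¹
  have hcondensate := (hasDerivAt_const ρ (η ^ 2)).div
    ((hasDerivAt_fF 0 ρ).sub_const (u * q)) hgap.ne'
  have hquadratic := (hasDerivAt_pow 2 ρ).const_mul (v / 2)
  have hsplit : (fun r => p2eta ν m μ v u β lam q r η) = fun r =>
      ((2 * π) ^ ν)⁻¹ * (∫ k, p2Int ν m μ v u β lam q r k) - u / 2 * q ^ 2 + v / 2 * r ^ 2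
        + η ^ 2 / (fF ν m μ v 0 r - u * q) := by
    ext r
    rw [p2eta, p2, integral_const_mul]
  rw [hsplit]
  refine (((hp2.sub_const _).add hquadratic).add hcondensate).congr_deriv ?_
  rw [integral_const_mul, integral_const_mul]
  unfold dp2Int
  push_cast
  ring

theorem statement6
    (ν : ℕ) (hν : 1 ≤ ν) (m β μ u v : ℝ) (hm : 0 < m) (hβ : 0 < β)
    (hv : 0 < v) (hvu : 0 < v - u)
    (lam : Kspace ν → ℂ) (hmeas : Measurable lam) (hlam0 : lam 0 = 1)
    (hlam1 : ∀ k, ‖lam k‖ ≤ 1)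
    (c δ : ℝ) (hδ : 0 < δ)
    (hdec : ∀ k : Kspace ν, ‖lam k‖ ≤ c / (1 + ‖k‖ ^ (max (ν : ℝ) ((ν : ℝ) / 2 + 1) + δ)))
    (q : ℝ) (hq : 0 ≤ q) (η : ℝ) (hη : 0 ≤ η) :
    ∀ ρ : ℝ, 0 ≤ ρ → 0 < sigma0 μ v u q ρ →
      HasDerivAt (fun r : ℝ => p2eta ν m μ v u β lam q r η)
        (-v * (∫ k : Kspace ν, ((2 * π) ^ ν)⁻¹ *
            ((Real.exp (β * eE ν m μ v u lam k q ρ) - 1)⁻¹ *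
                (fF ν m μ v k ρ / eE ν m μ v u lam k q ρ)
              + (1 / 2) * (fF ν m μ v k ρ / eE ν m μ v u lam k q ρ - 1)))
          - v * η ^ 2 / (fF ν m μ v 0 ρ - u * q) ^ 2 + v * ρ) ρ :=
  statement6_general ν m β μ u v hm hβ lam hmeas hlam1 c δ hδ hdec q hq η

end PB
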